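/- If a finite simple graph G is the disjoint union of graphs G_1, …, G_p (p ≥ 1, each G_i with at least one vertex), then b*(G) = max_{1 ≤ i ≤ p} b*(G_i). -/

import Mathlib

variable {V : Type*} {W : Type*}

/-- A proper coloring of `G` using colors `{1, …, k}`: colors lie in `{1,…,k}`,
adjacent vertices get different colors, and every color in `{1,…,k}` is used. -/
def IsProperKColoring (G : SimpleGraph V) (k : ℕ) (c : V → ℕ) : Prop :=
  (∀ v, c v ∈ Set.Icc 1 k) ∧
  (∀ u v, G.Adj u v → c u ≠ c v) ∧
  (∀ j ∈ Set.Icc 1 k, ∃ v, c v = j)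

/-- `u` is a b-vertex: every color `j ∈ {1,…,k}` with `j ≠ c u` appears on a neighbor of `u`. -/
def IsBVertex (G : SimpleGraph V) (k : ℕ) (c : V → ℕ) (u : V) : Prop :=
  ∀ j ∈ Set.Icc 1 k, j ≠ c u → ∃ w, G.Adj u w ∧ c w = j

/-- `u` is a nice vertex: it is a b-vertex and for every color `j ≠ c u` in `{1,…,k}`
it has a b-vertex neighbor of color `j`. -/
def IsNiceVertex (G : SimpleGraph V) (k : ℕ) (c : V → ℕ) (u : V) : Prop :=
  IsBVertex G k c u ∧
  ∀ j ∈ Set.Icc 1 k, j ≠ c u → ∃ w, G.Adj u w ∧ c w = j ∧ IsBVertex G k c w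

/-- A Grundy coloring using `k` colors: proper, and every vertex of color `j` has a
neighbor of each smaller color `i ≥ 1`. -/
def IsGrundyColoring (G : SimpleGraph V) (k : ℕ) (c : V → ℕ) : Prop :=
  IsProperKColoring G k c ∧
  ∀ i j : ℕ, 1 ≤ i → i < j → j ≤ k → ∀ v, c v = j → ∃ w, G.Adj v w ∧ c w = i

/-- A z-coloring: a Grundy coloring with a nice vertex of (top) color `k`. -/
def IsZColoring (G : SimpleGraph V) (k : ℕ) (c : V → ℕ) : Prop :=
  IsGrundyColoring G k c ∧ ∃ u, c u = k ∧ IsNiceVertex G k c u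

/-- A b*-coloring: a proper coloring with a nice vertex of (top) color `k`. -/
def IsBStarColoring (G : SimpleGraph V) (k : ℕ) (c : V → ℕ) : Prop :=
  IsProperKColoring G k c ∧ ∃ u, c u = k ∧ IsNiceVertex G k c u

/-- The z-chromatic number: largest `k` admitting a z-coloring with `k` colors. -/
noncomputable def zNum (G : SimpleGraph V) : ℕ :=
  sSup {k | ∃ c : V → ℕ, IsZColoring G k c}

/-- The b*-chromatic number: largest `k` admitting a b*-coloring with `k` colors. -/
noncomputable def bStar (G : SimpleGraph V) : ℕ :=
  sSup {k | ∃ c : V → ℕ, IsBStarColoring G k c}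

/-- `m*(G)`: the largest `k` such that some vertex `u` has `k` distinct neighbors,
each of degree at least `k`. -/
noncomputable def mStar (G : SimpleGraph V) : ℕ :=
  sSup {k | ∃ (u : V) (s : Finset V), (↑s : Set V) ⊆ G.neighborSet u ∧ s.card = k ∧
    ∀ v ∈ s, k ≤ (G.neighborSet v).ncard}

/-- The clique number `ω(G)`. -/
noncomputable def omegaNum (G : SimpleGraph V) : ℕ :=
  sSup {n | ∃ s : Finset V, G.IsNClique n s}

/-! A nice vertex, its neighbors and their neighbors all lie in one part, so a b*-coloring of
`G` restricts to a b*-coloring of that part with the same number of colors. Conversely, a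
b*-coloring of a part with the largest number `K` of colors, together with b*-colorings of the
other parts (which use at most `K` colors), is a b*-coloring of `G`.

This needs every nonempty finite graph to have a b*-coloring at all. Take a proper coloring by
positive integers minimizing `∑ v, (|V| + 1) ^ c v`. Every vertex `u` is then nice for `k = c u`:
if no neighbor of some color `j < k` were a b-vertex, recoloring `u` with `j` and each such
neighbor with a color missing around it would keep the coloring proper, take `u` out of color
`k` and introduce only colors below `k`, which lowers the potential. A vertex of largest color
gives the b*-coloring. -/

open Finset

section BVertex

variable {U : Type*} {G : SimpleGraph V} {k : ℕ} {c : V → ℕ}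

theorem IsBVertex.exists_apply_eq {u : V} (hu : IsBVertex G k c u) {j : ℕ}
    (hj : j ∈ Set.Icc 1 k) : ∃ v, c v = j := by
  by_cases hju : j = c u
  · exact ⟨u, hju.symm⟩
  · obtain ⟨w, -, hw⟩ := hu j hj hju
    exact ⟨w, hw⟩

theorem IsBVertex.map {H : SimpleGraph U} (f : H →g G) {x : U}
    (hx : IsBVertex H k (c ∘ f) x) : IsBVertex G k c (f x) := by
  intro j hj hne
  obtain ⟨y, hxy, hy⟩ := hx j hj hne
  exact ⟨f y, f.map_adj hxy, hy⟩

theorem IsNiceVertex.map {H : SimpleGraph U} (f : H →g G) {x : U}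
    (hx : IsNiceVertex H k (c ∘ f) x) : IsNiceVertex G k c (f x) := by
  refine ⟨hx.1.map f, fun j hj hne => ?_⟩
  obtain ⟨y, hxy, hy, hyb⟩ := hx.2 j hj hne
  exact ⟨f y, f.map_adj hxy, hy, hyb.map f⟩

variable {s : Set V}

theorem IsBVertex.induce (hs : ∀ v w, G.Adj v w → v ∈ s → w ∈ s) {v : V} (hv : v ∈ s)
    (h : IsBVertex G k c v) :
    IsBVertex (G.induce s) k (c ∘ (↑)) ⟨v, hv⟩ := by
  intro j hj hne
  obtain ⟨w, hvw, hw⟩ := h j hj hne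
  exact ⟨⟨w, hs v w hvw hv⟩, hvw, hw⟩

theorem IsNiceVertex.induce (hs : ∀ v w, G.Adj v w → v ∈ s → w ∈ s) {v : V} (hv : v ∈ s)
    (h : IsNiceVertex G k c v) :
    IsNiceVertex (G.induce s) k (c ∘ (↑)) ⟨v, hv⟩ := by
  refine ⟨h.1.induce hs hv, fun j hj hne => ?_⟩
  obtain ⟨w, hvw, hw, hwb⟩ := h.2 j hj hne
  exact ⟨⟨w, hs v w hvw hv⟩, hvw, hw, hwb.induce hs _⟩

theorem IsProperKColoring.isBStarColoring_induce (hs : ∀ v w, G.Adj v w → v ∈ s → w ∈ s)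
    (hc : IsProperKColoring G k c) {u : V} (hus : u ∈ s) (hu : c u = k)
    (hnice : IsNiceVertex G k c u) :
    IsBStarColoring (G.induce s) k (c ∘ (↑)) :=
  ⟨⟨fun v => hc.1 v, fun v w h => hc.2.1 v w h,
      fun _ hj => (hnice.1.induce hs hus).exists_apply_eq hj⟩, ⟨u, hus⟩, hu, hnice.induce hs hus⟩

end BVertex

section Bound

variable {G : SimpleGraph V} {k : ℕ} {c : V → ℕ}

theorem IsBStarColoring.le_card [Finite V] (h : IsBStarColoring G k c) : k ≤ Nat.card V := by
  obtain ⟨⟨hrange, -, hsurj⟩, -⟩ := h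
  calc k = Nat.card (Set.Icc 1 k) := by simp
    _ ≤ Nat.card V := Nat.card_le_card_of_surjective (fun v => ⟨c v, hrange v⟩)
        fun ⟨j, hj⟩ => (hsurj j hj).imp fun _ hv => Subtype.ext hv

theorem bddAbove_setOf_isBStarColoring [Finite V] (G : SimpleGraph V) :
    BddAbove {k | ∃ c : V → ℕ, IsBStarColoring G k c} :=
  ⟨Nat.card V, fun _ ⟨_, hc⟩ => hc.le_card⟩

theorem IsBStarColoring.le_bStar [Finite V] (h : IsBStarColoring G k c) : k ≤ bStar G :=
  le_csSup (bddAbove_setOf_isBStarColoring G) ⟨c, h⟩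

end Bound

section Existence

def IsPosColoring (G : SimpleGraph V) (c : V → ℕ) : Prop :=
  (∀ v, 0 < c v) ∧ ∀ u v, G.Adj u v → c u ≠ c v

theorem IsPosColoring.recolor {G : SimpleGraph V} {c c' : V → ℕ} (hc : IsPosColoring G c)
    (S : Set V) (hS : ∀ v ∈ S, ∀ w ∈ S, ¬G.Adj v w) (hpos : ∀ v ∈ S, 0 < c' v)
    (hout : ∀ v ∉ S, c' v = c v) (hin : ∀ v ∈ S, ∀ w, G.Adj v w → c' v ≠ c w) :
    IsPosColoring G c' := by
  refine ⟨fun v => ?_, fun v w hvw => ?_⟩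
  · by_cases hv : v ∈ S
    · exact hpos v hv
    · exact hout v hv ▸ hc.1 v
  · by_cases hv : v ∈ S <;> by_cases hw : w ∈ S
    · exact absurd hvw (hS v hv w hw)
    · exact hout w hw ▸ hin v hv w hvw
    · exact hout v hv ▸ (hin w hw v hvw.symm).symm
    · exact hout v hv ▸ hout w hw ▸ hc.2 v w hvw

theorem exists_isPosColoring [Finite V] (G : SimpleGraph V) : ∃ c, IsPosColoring G c := by
  obtain ⟨n, ⟨e⟩⟩ := Finite.exists_equiv_fin V
  exact ⟨fun v => e v + 1, fun v => Nat.succ_pos _,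
    fun u v huv h => huv.ne (e.injective (Fin.ext (Nat.succ_injective h)))⟩

/-- In base `|V| + 1`, the digit of `potential c` at place `t` is the number of vertices of
color `t`. -/
def potential [Fintype V] (c : V → ℕ) : ℕ :=
  ∑ v, (Fintype.card V + 1) ^ c v

theorem potential_lt_potential [Fintype V] {c c' : V → ℕ} {u : V} {k : ℕ}
    (hu : c' u ≠ c u) (hk : k ≤ c u) (hc' : ∀ v, c' v ≠ c v → c' v < k) :
    potential c' < potential c := by
  classical
  set B := Fintype.card V + 1
  set S := univ.filter fun v => c' v ≠ c v
  have huS : u ∈ S := mem_filter.2 ⟨mem_univ u, hu⟩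
  have hk₀ : 0 < k := (Nat.zero_le _).trans_lt (hc' u hu)
  have hS : ∑ v ∈ S, B ^ c' v < ∑ v ∈ S, B ^ c v := calc
    ∑ v ∈ S, B ^ c' v ≤ ∑ _v ∈ S, B ^ (k - 1) :=
        sum_le_sum fun v hv => Nat.pow_le_pow_right (Nat.succ_pos _)
          (Nat.le_sub_one_of_lt (hc' v (mem_filter.1 hv).2))
    _ = #S * B ^ (k - 1) := by rw [sum_const, smul_eq_mul]
    _ < B * B ^ (k - 1) :=
        Nat.mul_lt_mul_of_pos_right (Nat.lt_succ_of_le (card_le_univ S))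
          (Nat.pow_pos (Nat.succ_pos _))
    _ = B ^ k := by rw [← pow_succ', Nat.sub_add_cancel hk₀]
    _ ≤ B ^ c u := Nat.pow_le_pow_right (Nat.succ_pos _) hk
    _ ≤ ∑ v ∈ S, B ^ c v :=
        single_le_sum (f := fun v => B ^ c v) (fun _ _ => Nat.zero_le _) huS
  have hSc : ∑ v ∈ univ.filter (fun v => ¬c' v ≠ c v), B ^ c' v =
      ∑ v ∈ univ.filter (fun v => ¬c' v ≠ c v), B ^ c v :=
    sum_congr rfl fun v hv => by rw [not_not.1 (mem_filter.1 hv).2]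
  unfold potential
  rw [← sum_filter_add_sum_filter_not univ (fun v => c' v ≠ c v),
    ← sum_filter_add_sum_filter_not univ (fun v => c' v ≠ c v) (fun v => B ^ c v), hSc]
  exact Nat.add_lt_add_right hS _

theorem exists_isPosColoring_potential_min [Fintype V] (G : SimpleGraph V) :
    ∃ c, IsPosColoring G c ∧ ∀ c', IsPosColoring G c' → potential c ≤ potential c' := by
  obtain ⟨c, hc, hmin⟩ := (InvImage.wf potential wellFounded_lt).has_min {c | IsPosColoring G c}
    (exists_isPosColoring G)
  exact ⟨c, hc, fun c' hc' => not_lt.1 (hmin c' hc')⟩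

variable [Fintype V] {G : SimpleGraph V} {c : V → ℕ}

theorem IsPosColoring.exists_adj_apply_eq_of_potential_min (hc : IsPosColoring G c)
    (hmin : ∀ c', IsPosColoring G c' → potential c ≤ potential c') {v : V} {i : ℕ} (hi : 0 < i)
    (hiv : i < c v) :
    ∃ w, G.Adj v w ∧ c w = i := by
  classical
  by_contra! hfree
  have hc' : IsPosColoring G (Function.update c v i) :=
    hc.recolor {v} (by rintro _ rfl _ rfl; exact G.irrefl) (by rintro _ rfl; simpa using hi)
      (fun _ h => Function.update_of_ne h _ _)
      (by rintro _ rfl w hvw; simpa using (hfree w hvw).symm)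
  refine (hmin _ hc').not_gt (potential_lt_potential (u := v) (by simpa using hiv.ne) le_rfl ?_)
  intro w hw
  obtain rfl : w = v := by by_contra h; simp [h] at hw
  simpa using hiv

theorem IsPosColoring.isBVertex_of_potential_min (hc : IsPosColoring G c)
    (hmin : ∀ c', IsPosColoring G c' → potential c ≤ potential c') (u : V) :
    IsBVertex G (c u) c u := fun _ hj hne =>
  hc.exists_adj_apply_eq_of_potential_min hmin hj.1 (lt_of_le_of_ne hj.2 hne)

theorem IsPosColoring.isNiceVertex_of_potential_min (hc : IsPosColoring G c)
    (hmin : ∀ c', IsPosColoring G c' → potential c ≤ potential c') (u : V) :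
    IsNiceVertex G (c u) c u := by
  classical
  refine ⟨hc.isBVertex_of_potential_min hmin u, fun j hj hne => ?_⟩
  by_contra! hbad
  set S := {w | G.Adj u w ∧ c w = j}
  have hmissing : ∀ w ∈ S, ∃ m ∈ Set.Icc 1 (c u), m ≠ c w ∧ ∀ x, G.Adj w x → c x ≠ m := by
    rintro w ⟨huw, hw⟩
    simpa [IsBVertex, and_assoc] using hbad w huw hw
  choose! m hm hmw hmx using hmissing
  have hc₁ : IsPosColoring G (S.piecewise m c) :=
    hc.recolor S (fun v hv w hw hvw => hc.2 v w hvw (hv.2.trans hw.2.symm))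
      (fun v hv => by rw [Set.piecewise_eq_of_mem _ _ _ hv]; exact (hm v hv).1)
      (fun v hv => Set.piecewise_eq_of_notMem _ _ _ hv)
      (fun v hv w hvw => by
        simpa [Set.piecewise_eq_of_mem _ _ _ hv] using (hmx v hv w hvw).symm)
  have hc₂ : IsPosColoring G (Function.update (S.piecewise m c) u j) := by
    refine hc₁.recolor {u} (by rintro _ rfl _ rfl; exact G.irrefl)
      (by rintro _ rfl; rw [Function.update_self]; exact hj.1)
      (fun _ h => Function.update_of_ne h _ _) ?_
    rintro _ rfl w huw
    rw [Function.update_self]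
    by_cases hw : w ∈ S
    · simpa [Set.piecewise_eq_of_mem _ _ _ hw, hw.2] using (hmw w hw).symm
    · rw [Set.piecewise_eq_of_notMem _ _ _ hw]
      exact fun h => hw ⟨huw, h.symm⟩
  refine (hmin _ hc₂).not_gt (potential_lt_potential (u := u) (by simpa using hne) le_rfl ?_)
  intro v hv
  by_cases hvu : v = u
  · subst hvu
    simpa using lt_of_le_of_ne hj.2 hne
  rw [Function.update_of_ne hvu] at hv ⊢
  by_cases hvS : v ∈ S
  · rw [Set.piecewise_eq_of_mem _ _ _ hvS]
    exact lt_of_le_of_ne (hm v hvS).2 (hmx v hvS u hvS.1.symm).symm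
  · simp [Set.piecewise_eq_of_notMem _ _ _ hvS] at hv

end Existence

theorem exists_isBStarColoring [Finite V] [Nonempty V] (G : SimpleGraph V) :
    ∃ k c, IsBStarColoring G k c := by
  have := Fintype.ofFinite V
  obtain ⟨c, hc, hmin⟩ := exists_isPosColoring_potential_min G
  obtain ⟨u, hu⟩ := Finite.exists_max c
  have hnice := hc.isNiceVertex_of_potential_min hmin u
  exact ⟨c u, c, ⟨fun v => ⟨hc.1 v, hu v⟩, hc.2, fun _ hj => hnice.1.exists_apply_eq hj⟩,
    u, rfl, hnice⟩

theorem exists_isBStarColoring_bStar [Finite V] [Nonempty V] (G : SimpleGraph V) :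
    ∃ c, IsBStarColoring G (bStar G) c :=
  Nat.sSup_mem (exists_isBStarColoring G) (bddAbove_setOf_isBStarColoring G)

theorem isBStarColoring_glue {ι : Type*} {G : SimpleGraph W} {P : W → ι}
    (hedge : ∀ u v, G.Adj u v → P u = P v) {k : ℕ} {i₀ : ι}
    (d : ∀ i, {w | P w = i} → ℕ) (hrange : ∀ i x, d i x ∈ Set.Icc 1 k)
    (hproper : ∀ i x y, (G.induce {w | P w = i}).Adj x y → d i x ≠ d i y)
    (hd₀ : IsBStarColoring (G.induce {w | P w = i₀}) k (d i₀)) :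
    IsBStarColoring G k fun w => d (P w) ⟨w, rfl⟩ := by
  set c : W → ℕ := fun w => d (P w) ⟨w, rfl⟩
  have hc : ∀ i (x : {w | P w = i}), c x = d i x := by
    rintro i ⟨w, rfl⟩
    rfl
  obtain ⟨⟨-, -, hsurj⟩, u, hu, hnice⟩ := hd₀
  have hnice' : IsNiceVertex (G.induce {w | P w = i₀}) k
      (c ∘ (SimpleGraph.Embedding.induce (G := G) _).toHom) u := by
    convert hnice
    exact funext (hc i₀)
  refine ⟨⟨fun w => hrange _ _, fun v w hvw => ?_, fun j hj => ?_⟩, u, (hc i₀ u).trans hu,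
    hnice'.map _⟩
  · exact (hc (P w) ⟨v, hedge v w hvw⟩).trans_ne (hproper _ _ ⟨w, rfl⟩ hvw)
  · obtain ⟨x, hx⟩ := hsurj j hj
    exact ⟨x, (hc i₀ x).trans hx⟩

theorem bStar_disjoint_union_general {ι : Type*} [Fintype ι] [Nonempty ι]
    [Fintype W] (G : SimpleGraph W) (P : W → ι)
    (hedge : ∀ u v, G.Adj u v → P u = P v)
    (hfib : ∀ i, ∃ w, P w = i) :
    bStar G = Finset.univ.sup fun i => bStar (G.induce {w | P w = i}) := by
  have hclosed (i : ι) : ∀ v w, G.Adj v w → v ∈ {w | P w = i} → w ∈ {w | P w = i} :=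
    fun v w hvw hv => (hedge v w hvw).symm.trans hv
  refine le_antisymm (csSup_le' ?_) ?_
  · rintro k ⟨c, hc, u, hu, hnice⟩
    exact (hc.isBStarColoring_induce (hclosed (P u)) rfl hu hnice).le_bStar.trans
      (le_sup (f := fun i => bStar (G.induce {w | P w = i})) (mem_univ (P u)))
  · have (i : ι) : Nonempty {w | P w = i} := let ⟨w, hw⟩ := hfib i; ⟨⟨w, hw⟩⟩
    choose d hd using fun i => exists_isBStarColoring_bStar (G.induce {w | P w = i})
    obtain ⟨i₀, -, hi₀⟩ := exists_mem_eq_sup univ univ_nonempty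
      fun i => bStar (G.induce {w | P w = i})
    rw [hi₀]
    refine (isBStarColoring_glue hedge d (fun i x => ?_) (fun i => (hd i).1.2.1) (hd i₀)).le_bStar
    exact Set.Icc_subset_Icc_right
      (hi₀ ▸ le_sup (f := fun i => bStar (G.induce {w | P w = i})) (mem_univ i)) ((hd i).1.1 x)

/-- if a finite simple graph `G` is the disjoint union of the (nonempty)
induced subgraphs `G[P⁻¹(i)]`, `i ∈ ι` (every edge of `G` joins vertices in the same
part, each part is nonempty, and there is at least one part), then
`b*(G) = max_i b*(G[P⁻¹(i)])`. -/
theorem bStar_disjoint_union {ι : Type*} [Fintype ι] [Nonempty ι] [DecidableEq ι]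
    [Fintype W] (G : SimpleGraph W) (P : W → ι)
    (hedge : ∀ u v, G.Adj u v → P u = P v)
    (hfib : ∀ i, ∃ w, P w = i) :
    bStar G = Finset.univ.sup fun i => bStar (G.induce {w | P w = i}) :=
  bStar_disjoint_union_general G P hedge hfib
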